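/- arXiv:2002.10273 — 3 statements merged into one kernel-verified Lean document; each statement's English description precedes it below -/
import Mathlib

section
/- Let 2 < p < 4, 0 < ε < p−2, θ > 2, K > 0, and let a satisfy max{0, (p−θ)/(p−2)} < a < 1. Define F(t) = |t|^p + a(p−2)|t|^{p−ε} sin²(|t|^ε/ε) with derivative f = F′, and set t_n = (ε(nπ + 3π/4))^{1/ε}. Then for every n, f(t_n)·t_n − θ·F(t_n) − K·t_n² = |t_n|^p[(p−θ) − a(p−2) + a(p−2)(p−θ−ε)/(2|t_n|^ε)] − K·t_n², and this quantity tends to −∞ as n → ∞. In particular F fails the condition: there exist θ > 2 and K > 0 such that f(t)t − θF(t) + Kt² ≥ 0 for all t ∈ ℝ. -/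
/-!
For `t > 0` put `u = t^ε/ε` and `C = a(p-2)`. Differentiating `F` gives the identity
`f(t)t - θF(t) = (p-θ)t^p + C(p-ε-θ)t^{p-ε} sin²u + C t^p sin 2u`.
The points `t_n` are chosen so that `2u = 3π/2 + 2nπ`, where `sin²u = 1/2` and `sin 2u = -1`;
there the right-hand side is `(p-θ-C)t_n^p + O(t_n^{p-ε})`, and `p - θ - C < 0` is exactly
the lower bound on `a`. Since `p > 2`, the term `K t_n²` is negligible as well.
-/

open Filter Real

noncomputable def modelF (p ε C t : ℝ) : ℝ := |t| ^ p + C * |t| ^ (p - ε) * sin (|t| ^ ε / ε) ^ 2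

noncomputable def testPoint (ε : ℝ) (n : ℕ) : ℝ := (ε * (n * π + 3 * π / 4)) ^ (1 / ε)

section ModelF

variable {p ε C x : ℝ}

theorem hasDerivAt_modelF (hε : ε ≠ 0) (hx : 0 < x) :
    HasDerivAt (modelF p ε C)
      (p * x ^ (p - 1) + C * ((p - ε) * x ^ (p - ε - 1) * sin (x ^ ε / ε) ^ 2
        + x ^ (p - 1) * sin (2 * (x ^ ε / ε)))) x := by
  have hpow : ∀ q : ℝ, HasDerivAt (fun y : ℝ => y ^ q) (q * x ^ (q - 1)) x :=
    fun q => hasDerivAt_rpow_const (Or.inl hx.ne')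
  have hsin := ((hasDerivAt_sin _).comp x ((hpow ε).div_const ε)).pow 2
  have hsum := (hpow p).add (((hpow (p - ε)).mul hsin).const_mul C)
  have hexp : x ^ (p - ε) * x ^ (ε - 1) = x ^ (p - 1) := by
    rw [← rpow_add hx]; ring_nf
  refine (hsum.congr_of_eventuallyEq ?_).congr_deriv ?_
  · filter_upwards [eventually_gt_nhds hx] with y hy
    simp [modelF, abs_of_pos hy, mul_assoc]
  · rw [sin_two_mul, ← hexp]
    simp only [Pi.pow_apply, Function.comp_apply, Nat.cast_ofNat]
    field_simp
    ring

theorem deriv_modelF_mul_sub (θ : ℝ) (hε : ε ≠ 0) (hx : 0 < x) :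
    deriv (modelF p ε C) x * x - θ * modelF p ε C x =
      (p - θ) * x ^ p + C * (p - ε - θ) * x ^ (p - ε) * sin (x ^ ε / ε) ^ 2
        + C * x ^ p * sin (2 * (x ^ ε / ε)) := by
  have hmul : ∀ q : ℝ, x ^ (q - 1) * x = x ^ q := fun q => by
    rw [← rpow_add_one hx.ne', sub_add_cancel]
  rw [(hasDerivAt_modelF hε hx).deriv, modelF, abs_of_pos hx]
  linear_combination p * hmul p + C * (p - ε) * sin (x ^ ε / ε) ^ 2 * hmul (p - ε)
    + C * sin (2 * (x ^ ε / ε)) * hmul p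

end ModelF

theorem sin_sq_and_sin_two_mul_of_two_mul_eq {u : ℝ} {n : ℕ}
    (hu : 2 * u = π / 2 + π + n * (2 * π)) : sin u ^ 2 = 1 / 2 ∧ sin (2 * u) = -1 := by
  rw [sin_sq_eq_half_sub, hu, sin_add_nat_mul_two_pi, cos_add_nat_mul_two_pi, sin_add_pi,
    cos_add_pi, sin_pi_div_two, cos_pi_div_two]
  norm_num

theorem deriv_modelF_mul_sub_of_resonant {p ε C θ x : ℝ} {n : ℕ} (hε : ε ≠ 0) (hx : 0 < x)
    (hu : x ^ ε / ε = 3 * π / 4 + n * π) :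
    deriv (modelF p ε C) x * x - θ * modelF p ε C x =
      (p - θ - C) * x ^ p + C * (p - θ - ε) / 2 * x ^ (p - ε) := by
  obtain ⟨hsq, hsin2⟩ := sin_sq_and_sin_two_mul_of_two_mul_eq (u := x ^ ε / ε) (n := n)
    (by rw [hu]; ring)
  rw [deriv_modelF_mul_sub θ hε hx, hsq, hsin2]
  ring

theorem abs_rpow_mul_add_div_two_mul_abs_rpow {p ε x : ℝ} (hx : 0 < x) (A B : ℝ) :
    |x| ^ p * (A + B / (2 * |x| ^ ε)) = A * x ^ p + B / 2 * x ^ (p - ε) := by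
  rw [abs_of_pos hx, rpow_sub hx]
  field_simp [(rpow_pos_of_pos hx ε).ne']

theorem tendsto_mul_rpow_add_mul_rpow_add_mul_rpow_atBot {A B E p q r : ℝ} (hA : A < 0)
    (hp : 0 < p) (hq : q < p) (hr : r < p) :
    Tendsto (fun x : ℝ => A * x ^ p + B * x ^ q + E * x ^ r) atTop atBot := by
  have hlower : Tendsto (fun x : ℝ => A + B * x ^ (-(p - q)) + E * x ^ (-(p - r)))
      atTop (nhds A) := by
    simpa using (tendsto_const_nhds.add ((tendsto_rpow_neg_atTop (sub_pos.2 hq)).const_mul B)).add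
      ((tendsto_rpow_neg_atTop (sub_pos.2 hr)).const_mul E)
  refine ((tendsto_rpow_atTop hp).atTop_mul_neg hA hlower).congr' ?_
  filter_upwards [eventually_gt_atTop 0] with x hx
  have hsplit : ∀ s : ℝ, x ^ p * x ^ (-(p - s)) = x ^ s := fun s => by
    rw [← rpow_add hx]; ring_nf
  linear_combination B * hsplit q + E * hsplit r

section TestPoint

variable {ε : ℝ}

theorem testPoint_base_pos (hε : 0 < ε) (n : ℕ) : 0 < ε * (n * π + 3 * π / 4) := by
  have := pi_pos
  positivity

theorem testPoint_pos (hε : 0 < ε) (n : ℕ) : 0 < testPoint ε n :=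
  rpow_pos_of_pos (testPoint_base_pos hε n) _

theorem testPoint_rpow_div (hε : 0 < ε) (n : ℕ) :
    testPoint ε n ^ ε / ε = 3 * π / 4 + n * π := by
  rw [testPoint, one_div, rpow_inv_rpow (testPoint_base_pos hε n).le hε.ne']
  field_simp
  ring

theorem tendsto_testPoint (hε : 0 < ε) : Tendsto (testPoint ε) atTop atTop := by
  have hbase : Tendsto (fun n : ℕ => ε * (n * π + 3 * π / 4)) atTop atTop :=
    (tendsto_atTop_add_const_right _ _
      (tendsto_natCast_atTop_atTop.atTop_mul_const pi_pos)).const_mul_atTop hε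
  exact (tendsto_rpow_atTop (one_div_pos.2 hε)).comp hbase

end TestPoint

theorem stmt_2_general (p ε θ K a : ℝ) (hp2 : 2 < p) (hε : 0 < ε)
    (ha1 : max 0 ((p - θ) / (p - 2)) < a)
    (F f : ℝ → ℝ)
    (hF : ∀ t : ℝ, F t = |t| ^ p + a * (p - 2) * |t| ^ (p - ε) * Real.sin (|t| ^ ε / ε) ^ 2)
    (hf : f = deriv F)
    (t : ℕ → ℝ)
    (ht : ∀ n : ℕ, t n = (ε * (n * Real.pi + 3 * Real.pi / 4)) ^ (1 / ε)) :
    (∀ n : ℕ, f (t n) * t n - θ * F (t n) - K * (t n) ^ 2 =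
        |t n| ^ p * ((p - θ) - a * (p - 2) + a * (p - 2) * (p - θ - ε) / (2 * |t n| ^ ε))
          - K * (t n) ^ 2) ∧
      Filter.Tendsto (fun n : ℕ => f (t n) * t n - θ * F (t n) - K * (t n) ^ 2)
        Filter.atTop Filter.atBot ∧
      ¬ (∀ s : ℝ, 0 ≤ f s * s - θ * F s + K * s ^ 2) := by
  obtain rfl : F = modelF p ε (a * (p - 2)) := funext hF
  obtain rfl : t = testPoint ε := funext ht
  subst hf
  set C := a * (p - 2)
  have hidentity : ∀ n : ℕ, deriv (modelF p ε C) (testPoint ε n) * testPoint ε n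
      - θ * modelF p ε C (testPoint ε n) =
        (p - θ - C) * testPoint ε n ^ p + C * (p - θ - ε) / 2 * testPoint ε n ^ (p - ε) :=
    fun n => deriv_modelF_mul_sub_of_resonant hε.ne' (testPoint_pos hε n) (testPoint_rpow_div hε n)
  have hleading : p - θ - C < 0 := by
    have := (div_lt_iff₀ (sub_pos.2 hp2)).1 ((le_max_right _ _).trans_lt ha1)
    linarith
  have hlim : ∀ e : ℝ, Tendsto (fun n : ℕ => deriv (modelF p ε C) (testPoint ε n)
      * testPoint ε n - θ * modelF p ε C (testPoint ε n) + e * testPoint ε n ^ 2) atTop atBot :=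
    fun e => ((tendsto_mul_rpow_add_mul_rpow_add_mul_rpow_atBot (B := C * (p - θ - ε) / 2)
      (E := e) hleading (by linarith) (by linarith : p - ε < p) hp2).comp
        (tendsto_testPoint hε)).congr fun n => by simp [hidentity]
  refine ⟨fun n => ?_, ?_, fun hWAR => ?_⟩
  · rw [abs_rpow_mul_add_div_two_mul_abs_rpow (testPoint_pos hε n), hidentity]
  · simpa only [neg_mul, ← sub_eq_add_neg] using hlim (-K)
  · obtain ⟨n, hn⟩ := ((hlim K).eventually (eventually_lt_atBot 0)).exists
    exact (hWAR (testPoint ε n)).not_gt hn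

/-- For `2 < p < 4`, `0 < ε < p - 2`, `θ > 2`, `K > 0` and
`max{0, (p-θ)/(p-2)} < a < 1`, with `F` the model nonlinearity, `f = F'` and
`t_n = (ε(nπ + 3π/4))^{1/ε}`, one has for every `n`
`f(t_n)t_n - θF(t_n) - K t_n² = |t_n|^p[(p-θ) - a(p-2) + a(p-2)(p-θ-ε)/(2|t_n|^ε)] - K t_n²`,
which tends to `-∞`; in particular the (WAR)-type inequality
`f(t)t - θF(t) + Kt² ≥ 0` for all `t` fails for these `θ`, `K`. -/
theorem stmt_2 (p ε θ K a : ℝ) (hp2 : 2 < p) (hp4 : p < 4) (hε : 0 < ε) (hεp : ε < p - 2)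
    (hθ : 2 < θ) (hK : 0 < K)
    (ha1 : max 0 ((p - θ) / (p - 2)) < a) (ha2 : a < 1)
    (F f : ℝ → ℝ)
    (hF : ∀ t : ℝ, F t = |t| ^ p + a * (p - 2) * |t| ^ (p - ε) * Real.sin (|t| ^ ε / ε) ^ 2)
    (hf : f = deriv F)
    (t : ℕ → ℝ)
    (ht : ∀ n : ℕ, t n = (ε * (n * Real.pi + 3 * Real.pi / 4)) ^ (1 / ε)) :
    (∀ n : ℕ, f (t n) * t n - θ * F (t n) - K * (t n) ^ 2 =
        |t n| ^ p * ((p - θ) - a * (p - 2) + a * (p - 2) * (p - θ - ε) / (2 * |t n| ^ ε))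
          - K * (t n) ^ 2) ∧
      Filter.Tendsto (fun n : ℕ => f (t n) * t n - θ * F (t n) - K * (t n) ^ 2)
        Filter.atTop Filter.atBot ∧
      ¬ (∀ s : ℝ, 0 ≤ f s * s - θ * F s + K * s ^ 2) :=
  stmt_2_general p ε θ K a hp2 hε ha1 F f hF hf t ht
end

section
/- Let 2 < p < 4, 0 < ε < p−2, and 0 < a < 1. Define F(t) = |t|^p + a(p−2)|t|^{p−ε} sin²(|t|^ε/ε) with derivative f = F′. Then for all t ≠ 0, f(t)·t − 2F(t) = (p−2)|t|^p(1 + a sin(2|t|^ε/ε)) + a(p−2)(p−2−ε)|t|^{p−ε} sin²(|t|^ε/ε), and consequently f(t)·t − 2F(t) ≥ (1−a)(p−2)|t|^p for all t ∈ ℝ. -/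
/-! `F` is the even extension `t ↦ G |t|` of the radial profile
`G r = r ^ p + a (p - 2) r ^ (p - ε) sin² (r ^ ε / ε)`, so `f t * t = r G'(r)` with `r = |t|`.
Differentiating the profile, the Euler operator `r ∂_r` multiplies `r ^ q` by `q`, and on the
oscillating factor it produces `2 r ^ ε sin θ cos θ = r ^ ε sin 2θ`, which against
`r ^ (p - ε)` is again of order `r ^ p`. The lower bound then follows from `sin 2θ ≥ -1`
together with `a ≥ 0` and `ε ≤ p - 2`. -/

open Real

noncomputable def modelProfile (p ε a r : ℝ) : ℝ :=
  r ^ p + a * (p - 2) * r ^ (p - ε) * sin (r ^ ε / ε) ^ 2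

theorem deriv_comp_abs_mul_self {G : ℝ → ℝ} {g' t : ℝ} (ht : t ≠ 0)
    (hG : HasDerivAt G g' |t|) : deriv (fun x => G |x|) t * t = g' * |t| := by
  have h : HasDerivAt (fun x => G |x|) (g' * SignType.sign t) t := hG.comp t (hasDerivAt_abs ht)
  rw [h.deriv, mul_assoc, sign_mul_self]

theorem hasDerivAt_modelProfile {p ε a r : ℝ} (hε : ε ≠ 0) (hr : 0 < r) :
    HasDerivAt (modelProfile p ε a)
      ((p * r ^ p + a * (p - 2) * ((p - ε) * r ^ (p - ε) * sin (r ^ ε / ε) ^ 2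
        + r ^ p * sin (2 * (r ^ ε / ε)))) / r) r := by
  have hpow : ∀ q : ℝ, HasDerivAt (fun x : ℝ => x ^ q) (q * r ^ (q - 1)) r :=
    fun q => hasDerivAt_rpow_const (Or.inl hr.ne')
  have hphase : HasDerivAt (fun x : ℝ => x ^ ε / ε) (r ^ (ε - 1)) r :=
    ((hpow ε).div_const ε).congr_deriv (mul_div_cancel_left₀ _ hε)
  have hsum := (hpow p).add
    (((hpow (p - ε)).mul (hphase.sin.pow 2)).const_mul (a * (p - 2)))
  refine (hsum.congr_of_eventuallyEq (.of_forall fun x => ?_)).congr_deriv ?_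
  · simp only [modelProfile, Pi.add_apply, Pi.mul_apply, Pi.pow_apply]
    ring
  have hr' := hr.ne'
  have hmul : r ^ (p - ε) * r ^ ε = r ^ p := by rw [← rpow_add hr, sub_add_cancel]
  simp only [Pi.pow_apply]
  rw [sin_two_mul, rpow_sub_one hr' p, rpow_sub_one hr' (p - ε), rpow_sub_one hr' ε]
  field_simp
  linear_combination (2 * a * (p - 2) * sin (r ^ ε / ε) * cos (r ^ ε / ε)) * hmul

theorem one_sub_mul_rpow_le {p ε a r : ℝ} (hp : 2 ≤ p) (hεp : ε ≤ p - 2) (ha : 0 ≤ a)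
    (hr : 0 ≤ r) (s u : ℝ) :
    (1 - a) * (p - 2) * r ^ p ≤
      (p - 2) * r ^ p * (1 + a * sin s) + a * (p - 2) * (p - 2 - ε) * r ^ (p - ε) * sin u ^ 2 := by
  have hrp : 0 ≤ (p - 2) * r ^ p := mul_nonneg (by linarith) (rpow_nonneg hr p)
  have hsin : 1 - a ≤ 1 + a * sin s := by nlinarith [neg_one_le_sin s]
  have hrest : 0 ≤ a * (p - 2) * (p - 2 - ε) * r ^ (p - ε) * sin u ^ 2 := by
    have : 0 ≤ a * (p - 2) * (p - 2 - ε) := mul_nonneg (mul_nonneg ha (by linarith)) (by linarith)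
    exact mul_nonneg (mul_nonneg this (rpow_nonneg hr _)) (sq_nonneg _)
  linarith [mul_le_mul_of_nonneg_left hsin hrp]

theorem stmt_3_general (p ε a : ℝ) (hp2 : 2 < p) (hε : 0 < ε) (hεp : ε < p - 2)
    (ha0 : 0 < a)
    (F f : ℝ → ℝ)
    (hF : ∀ t : ℝ, F t = |t| ^ p + a * (p - 2) * |t| ^ (p - ε) * Real.sin (|t| ^ ε / ε) ^ 2)
    (hf : f = deriv F) :
    (∀ t : ℝ, t ≠ 0 → f t * t - 2 * F t =
        (p - 2) * |t| ^ p * (1 + a * Real.sin (2 * (|t| ^ ε / ε)))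
          + a * (p - 2) * (p - 2 - ε) * |t| ^ (p - ε) * Real.sin (|t| ^ ε / ε) ^ 2) ∧
      ∀ t : ℝ, (1 - a) * (p - 2) * |t| ^ p ≤ f t * t - 2 * F t := by
  have hF' : F = fun x => modelProfile p ε a |x| := funext hF
  have euler : ∀ t : ℝ, t ≠ 0 → f t * t - 2 * F t =
      (p - 2) * |t| ^ p * (1 + a * Real.sin (2 * (|t| ^ ε / ε)))
        + a * (p - 2) * (p - 2 - ε) * |t| ^ (p - ε) * Real.sin (|t| ^ ε / ε) ^ 2 := by
    intro t ht
    have hr := abs_pos.2 ht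
    rw [hf, hF', deriv_comp_abs_mul_self ht (hasDerivAt_modelProfile hε.ne' hr),
      div_mul_cancel₀ _ hr.ne']
    simp only [modelProfile]
    ring
  refine ⟨euler, fun t => ?_⟩
  rcases eq_or_ne t 0 with rfl | ht
  · simp [hF, zero_rpow (by linarith : p ≠ 0), zero_rpow (by linarith : p - ε ≠ 0)]
  · rw [euler t ht]
    exact one_sub_mul_rpow_le hp2.le hεp.le ha0.le (abs_nonneg t) _ _

/-- For `2 < p < 4`, `0 < ε < p - 2`, `0 < a < 1`, with `F` the model
nonlinearity and `f = F'`: for `t ≠ 0`,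
`f(t)t - 2F(t) = (p-2)|t|^p(1 + a sin(2|t|^ε/ε)) + a(p-2)(p-2-ε)|t|^{p-ε} sin²(|t|^ε/ε)`,
and consequently `f(t)t - 2F(t) ≥ (1-a)(p-2)|t|^p` for all `t`. -/
theorem stmt_3 (p ε a : ℝ) (hp2 : 2 < p) (hp4 : p < 4) (hε : 0 < ε) (hεp : ε < p - 2)
    (ha0 : 0 < a) (ha1 : a < 1)
    (F f : ℝ → ℝ)
    (hF : ∀ t : ℝ, F t = |t| ^ p + a * (p - 2) * |t| ^ (p - ε) * Real.sin (|t| ^ ε / ε) ^ 2)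
    (hf : f = deriv F) :
    (∀ t : ℝ, t ≠ 0 → f t * t - 2 * F t =
        (p - 2) * |t| ^ p * (1 + a * Real.sin (2 * (|t| ^ ε / ε)))
          + a * (p - 2) * (p - 2 - ε) * |t| ^ (p - ε) * Real.sin (|t| ^ ε / ε) ^ 2) ∧
      ∀ t : ℝ, (1 - a) * (p - 2) * |t| ^ p ≤ f t * t - 2 * F t :=
  stmt_3_general p ε a hp2 hε hεp ha0 F f hF hf
end

section
/- Let 2 < p < 4, 0 < ε < p−2, and 0 < a < 1. Define F(t) = |t|^p + a(p−2)|t|^{p−ε} sin²(|t|^ε/ε) with derivative f = F′. Then for every t ∈ ℝ, f(t)·t ≥ 2F(t) ≥ 0. -/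
/-!
For `t ≠ 0` put `θ = |t|^ε / ε`, so that `t · θ'(t) = |t|^ε`. Differentiating term by term gives
`f(t) t - 2 F(t) = (p - 2) |t|^p (1 + a sin 2θ) + a (p - 2) (p - ε - 2) |t|^(p-ε) sin² θ`,
and both terms are nonnegative because `a ≤ 1` and `ε ≤ p - 2`.
-/

open Real

theorem hasDerivAt_abs_rpow_of_ne_zero (r : ℝ) {t : ℝ} (ht : t ≠ 0) :
    HasDerivAt (fun x : ℝ => |x| ^ r) (r * |t| ^ r / t) t := by
  convert (hasDerivAt_abs ht).rpow_const (p := r) (Or.inl (abs_ne_zero.2 ht)) using 1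
  rw [rpow_sub_one (abs_ne_zero.2 ht)]
  rcases ht.lt_or_gt with h | h <;> simp [h, abs_of_neg, abs_of_pos] <;> field_simp

theorem one_add_two_mul_sin_mul_cos_nonneg {a : ℝ} (ha0 : 0 ≤ a) (ha1 : a ≤ 1) (θ : ℝ) :
    0 ≤ 1 + 2 * a * (sin θ * cos θ) := by
  have h : -1 ≤ 2 * (sin θ * cos θ) := by
    rw [← mul_assoc, ← sin_two_mul]; exact neg_one_le_sin _
  linarith [mul_le_mul_of_nonneg_left h ha0]

noncomputable def modelNonlinearity (p ε a t : ℝ) : ℝ :=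
  |t| ^ p + a * (p - 2) * |t| ^ (p - ε) * sin (|t| ^ ε / ε) ^ 2

variable {p ε a : ℝ}

theorem modelNonlinearity_nonneg (hp : 2 ≤ p) (ha : 0 ≤ a) (t : ℝ) :
    0 ≤ modelNonlinearity p ε a t := by
  unfold modelNonlinearity
  have : 0 ≤ a * (p - 2) := mul_nonneg ha (by linarith)
  positivity

theorem modelNonlinearity_zero (hp : 0 < p) (hεp : ε < p) : modelNonlinearity p ε a 0 = 0 := by
  simp [modelNonlinearity, zero_rpow hp.ne', zero_rpow (sub_pos.2 hεp).ne']

theorem hasDerivAt_modelNonlinearity (hε : ε ≠ 0) {t : ℝ} (ht : t ≠ 0) :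
    HasDerivAt (modelNonlinearity p ε a)
      ((p * |t| ^ p + a * (p - 2) * ((p - ε) * |t| ^ (p - ε) * sin (|t| ^ ε / ε) ^ 2
        + 2 * |t| ^ p * (sin (|t| ^ ε / ε) * cos (|t| ^ ε / ε)))) / t) t := by
  have hsinSq := ((hasDerivAt_abs_rpow_of_ne_zero ε ht).div_const ε).sin.pow 2
  have h := (hasDerivAt_abs_rpow_of_ne_zero p ht).add
    (((hasDerivAt_abs_rpow_of_ne_zero (p - ε) ht).const_mul (a * (p - 2))).mul hsinSq)
  refine h.congr_deriv ?_
  have hsplit : |t| ^ p = |t| ^ (p - ε) * |t| ^ ε := by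
    rw [← rpow_add (abs_pos.2 ht), sub_add_cancel]
  rw [Pi.pow_apply, hsplit]
  field_simp
  push_cast
  ring

theorem two_mul_add_mul_sin_sq_le (hp : 2 ≤ p) (hεp : ε ≤ p - 2) (ha0 : 0 ≤ a) (ha1 : a ≤ 1)
    {X Y : ℝ} (hX : 0 ≤ X) (hY : 0 ≤ Y) (θ : ℝ) :
    2 * (X + a * (p - 2) * Y * sin θ ^ 2) ≤
      p * X + a * (p - 2) * ((p - ε) * Y * sin θ ^ 2 + 2 * X * (sin θ * cos θ)) := by
  have hosc : 0 ≤ (p - 2) * X * (1 + 2 * a * (sin θ * cos θ)) :=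
    mul_nonneg (mul_nonneg (by linarith) hX) (one_add_two_mul_sin_mul_cos_nonneg ha0 ha1 θ)
  have hdom : 0 ≤ a * (p - 2) * (p - ε - 2) * Y * sin θ ^ 2 := by
    have : 0 ≤ a * (p - 2) * (p - ε - 2) := mul_nonneg (mul_nonneg ha0 (by linarith)) (by linarith)
    positivity
  linarith

theorem stmt_4_general (p ε a : ℝ) (hp2 : 2 < p) (hε : 0 < ε) (hεp : ε < p - 2)
    (ha0 : 0 < a) (ha1 : a < 1)
    (F f : ℝ → ℝ)
    (hF : ∀ t : ℝ, F t = |t| ^ p + a * (p - 2) * |t| ^ (p - ε) * Real.sin (|t| ^ ε / ε) ^ 2)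
    (hf : f = deriv F) :
    ∀ t : ℝ, 2 * F t ≤ f t * t ∧ 0 ≤ 2 * F t := by
  obtain rfl : F = modelNonlinearity p ε a := funext hF
  subst hf
  intro t
  refine ⟨?_, by linarith [modelNonlinearity_nonneg hp2.le ha0.le (ε := ε) t]⟩
  rcases eq_or_ne t 0 with rfl | ht
  · simp [modelNonlinearity_zero (a := a) (by linarith) (by linarith : ε < p)]
  rw [(hasDerivAt_modelNonlinearity hε.ne' ht).deriv, div_mul_cancel₀ _ ht, modelNonlinearity]
  exact two_mul_add_mul_sin_sq_le hp2.le hεp.le ha0.le ha1.le (by positivity) (by positivity) _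

/-- For `2 < p < 4`, `0 < ε < p - 2`, `0 < a < 1`, with `F` the model
nonlinearity and `f = F'`: `f(t)·t ≥ 2F(t) ≥ 0` for every `t ∈ ℝ`. -/
theorem stmt_4 (p ε a : ℝ) (hp2 : 2 < p) (hp4 : p < 4) (hε : 0 < ε) (hεp : ε < p - 2)
    (ha0 : 0 < a) (ha1 : a < 1)
    (F f : ℝ → ℝ)
    (hF : ∀ t : ℝ, F t = |t| ^ p + a * (p - 2) * |t| ^ (p - ε) * Real.sin (|t| ^ ε / ε) ^ 2)
    (hf : f = deriv F) :
    ∀ t : ℝ, 2 * F t ≤ f t * t ∧ 0 ≤ 2 * F t :=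
  stmt_4_general p ε a hp2 hε hεp ha0 ha1 F f hF hf
end
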